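/- Let m = 2n with n ≥ 2, let F = F_1·F_2·⋯·F_m with F_s ∈ {L_s^+, L_s^-, M_s^+, M_s^-} for each 1 ≤ s ≤ m, and let 1 ≤ a < b ≤ n. Then V_{2a-1,2b-1}·F·e_{2a-1}^⊥·e_{2b-1}^⊥ = (-1)^{|F_{2a-1}|+|F_{2b-1}|+‖F_{2a-1}‖+‖F_{2b-1}‖+1}·F^{2a,2b-1} and V_{2a,2b}·F·e_{2a}^⊥·e_{2b}^⊥ = (-1)^{|F_{2a}|+|F_{2b}|+‖F_{2a}‖+‖F_{2b}‖}·F^{2a,2b-1}. -/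

import Mathlib

noncomputable section

/-- The bilinear map `B((a,b),(c,d)) = ∑ⱼ aⱼ dⱼ` on `ℂ^m × ℂ^m`. -/
def splitBilin (m : ℕ) :
    ((Fin m → ℂ) × (Fin m → ℂ)) →ₗ[ℂ] ((Fin m → ℂ) × (Fin m → ℂ)) →ₗ[ℂ] ℂ :=
  LinearMap.mk₂ ℂ (fun v w => ∑ j, v.1 j * w.2 j)
    (fun v v' w => by simp [add_mul, Finset.sum_add_distrib])
    (fun c v w => by
      simp only [LinearMap.smul_apply, Prod.smul_fst, Pi.smul_apply, smul_eq_mul,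
        Finset.mul_sum]
      exact Finset.sum_congr rfl fun i _ => by ring)
    (fun v w w' => by simp [mul_add, Finset.sum_add_distrib])
    (fun c v w => by
      simp only [Prod.smul_snd, Pi.smul_apply, smul_eq_mul, Finset.mul_sum]
      exact Finset.sum_congr rfl fun i _ => by ring)

/-- The quadratic form `Q(a, b) = ∑ⱼ aⱼ bⱼ` on `ℂ^m × ℂ^m` (the span of the
`f_j^+` and the `f_j^-`). -/
def splitQ (m : ℕ) : QuadraticForm ℂ ((Fin m → ℂ) × (Fin m → ℂ)) :=
  LinearMap.BilinMap.toQuadraticMap (splitBilin m)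

/-- The forward basis element `e_j^+` (1-based index `j`). -/
def eP (m : ℕ) (j : ℕ) : CliffordAlgebra (splitQ m) :=
  CliffordAlgebra.ι (splitQ m) ((fun i => if (i : ℕ) + 1 = j then 1 else 0), 0)

/-- The backward basis element `e_j^-` (1-based index `j`). -/
def eM (m : ℕ) (j : ℕ) : CliffordAlgebra (splitQ m) :=
  CliffordAlgebra.ι (splitQ m) (0, (fun i => if (i : ℕ) + 1 = j then 1 else 0))

/-- `e_j = e_j^+ + e_j^-`. -/
def ee (m : ℕ) (j : ℕ) : CliffordAlgebra (splitQ m) := eP m j + eM m j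

/-- `e_j^⊥ = e_j^+ - e_j^-`. -/
def eperp (m : ℕ) (j : ℕ) : CliffordAlgebra (splitQ m) := eP m j - eM m j

/-- The constant `i` for odd (1-based) indices and `1` for even indices. -/
def oddI (s : ℕ) : ℂ := if s % 2 = 1 then Complex.I else 1

/-- `L_s^+`, i.e. `e_s^+ e_s^- + i e_s^+` for odd `s` and `e_s^+ e_s^- + e_s^+` for even `s`. -/
def idemLp (m : ℕ) (s : ℕ) : CliffordAlgebra (splitQ m) := eP m s * eM m s + oddI s • eP m s

/-- `L_s^-`. -/
def idemLm (m : ℕ) (s : ℕ) : CliffordAlgebra (splitQ m) := eP m s * eM m s - oddI s • eP m s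

/-- `M_s^+`, i.e. `e_s^- e_s^+ + i e_s^-` for odd `s` and `e_s^- e_s^+ + e_s^-` for even `s`. -/
def idemMp (m : ℕ) (s : ℕ) : CliffordAlgebra (splitQ m) := eM m s * eP m s + oddI s • eM m s

/-- `M_s^-`. -/
def idemMm (m : ℕ) (s : ℕ) : CliffordAlgebra (splitQ m) := eM m s * eP m s - oddI s • eM m s

/-- A generic choice `F_s ∈ {L_s^+, L_s^-, M_s^+, M_s^-}`, encoded by
`‖F_s‖ : Bool` (`true` for the `M`'s) and `|F_s| : Bool`
(`true` for `L_s^-` and `M_s^+`). -/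
def idemF (m : ℕ) (s : ℕ) : Bool → Bool → CliffordAlgebra (splitQ m)
  | false, false => idemLp m s
  | false, true => idemLm m s
  | true, false => idemMm m s
  | true, true => idemMp m s

/-- Numerical value of `|F_s|` or `‖F_s‖`. -/
def bval (b : Bool) : ℕ := if b then 1 else 0

/-- The four-vector `V_{a,b} = -e_a^⊥ e_a e_b^⊥ e_b`. -/
def VV (m : ℕ) (a b : ℕ) : CliffordAlgebra (splitQ m) :=
  -(eperp m a * ee m a * eperp m b * ee m b)

/-- The ordered product `F = F_1 F_2 ⋯ F_m`, the factor `F_s` being encoded by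
`(nrm s, sg s) = (‖F_s‖, |F_s|)`. -/
def prodF (m : ℕ) (nrm sg : ℕ → Bool) : CliffordAlgebra (splitQ m) :=
  ((List.range m).map fun s => idemF m (s + 1) (nrm (s + 1)) (sg (s + 1))).prod

/-!
Put `D_s = e_s^⊥ e_s`, so that `V_{p,q} = -D_p D_q`. All one-index computations only use that
`(e_s^+, e_s^-)` satisfies the canonical anticommutation relations, while generators with distinct
indices anticommute. Hence `D_s` commutes with `F_t` for `t ≠ s` and acts on `F_s` by
`(-1)^{‖F_s‖}`, which gives `V_{p,q} F = -(-1)^{‖F_p‖+‖F_q‖} F`. On the other side, `e_p^⊥` moves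
left through `F_t` (`t > p`) turning it into `F̃_t`, and is absorbed by `F_p`: `F_p e_p^⊥ = ±i F_p`
for odd `p` and `F_p e_p^⊥ = ±F̃_p` for even `p`. So right multiplication by `e_{2k-1}^⊥` or
`e_{2k}^⊥` tildes all factors from position `2k` on, and two such flips leave exactly the factors
`2a, …, 2b-1` tilded.
-/

theorem prod_map_mul_eq_mul_prod_map {M : Type*} [Monoid M] {f g : ℕ → M} {x : M} :
    ∀ l : List ℕ, (∀ s ∈ l, f s * x = x * g s) → (l.map f).prod * x = x * (l.map g).prod
  | [], _ => by simp
  | s :: l, h => by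
    rw [List.map_cons, List.map_cons, List.prod_cons, List.prod_cons, mul_assoc,
      prod_map_mul_eq_mul_prod_map l fun t ht => h t (List.mem_cons_of_mem s ht), ← mul_assoc,
      h s List.mem_cons_self, mul_assoc]

theorem commute_mul_of_anticomm {A : Type*} [Ring A] {x y z : A} (hx : x * z = -(z * x))
    (hy : y * z = -(z * y)) : Commute (x * y) z := by
  rw [Commute, SemiconjBy, mul_assoc, hy, mul_neg, ← mul_assoc, hx, neg_mul, neg_neg, mul_assoc]

/-- The canonical anticommutation relations. -/
structure IsCARPair {A : Type*} [Ring A] (p q : A) : Prop where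
  mul_self_left : p * p = 0
  mul_self_right : q * q = 0
  mul_add_mul_swap : p * q + q * p = 1

@[simp] theorem bval_false : bval false = 0 := rfl

@[simp] theorem bval_true : bval true = 1 := rfl

theorem neg_one_pow_bval_not {R : Type*} [Ring R] (c : Bool) :
    (-1 : R) ^ bval (!c) = -(-1 : R) ^ bval c := by
  cases c <;> simp

section CARPair

variable {R A : Type*} [CommRing R] [Ring A] [Algebra R A] {p q : A}

def carIdem (p q : A) (z : R) : Bool → Bool → A
  | false, false => p * q + z • p
  | false, true => p * q - z • p
  | true, false => q * p - z • q
  | true, true => q * p + z • q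

namespace IsCARPair

theorem mul_swap (h : IsCARPair p q) : q * p = 1 - p * q := eq_sub_of_add_eq' h.mul_add_mul_swap

theorem mul_mul_left (h : IsCARPair p q) : p * q * p = p := by
  rw [mul_assoc, h.mul_swap, mul_sub, mul_one, ← mul_assoc, h.mul_self_left, zero_mul, sub_zero]

theorem mul_mul_right (h : IsCARPair p q) : q * p * q = q := by
  rw [h.mul_swap, sub_mul, one_mul, mul_assoc, h.mul_self_right, mul_zero, sub_zero]

theorem sub_mul_add (h : IsCARPair p q) : (p - q) * (p + q) = p * q - q * p := by
  rw [sub_mul, mul_add, mul_add, h.mul_self_left, h.mul_self_right]; abel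

theorem left_mul_sub (h : IsCARPair p q) : p * (p - q) = -(p * q) := by
  rw [mul_sub, h.mul_self_left, zero_sub]

theorem right_mul_sub (h : IsCARPair p q) : q * (p - q) = q * p := by
  rw [mul_sub, h.mul_self_right, sub_zero]

theorem left_mul_right_mul_sub (h : IsCARPair p q) : p * q * (p - q) = p := by
  rw [mul_assoc, h.right_mul_sub, ← mul_assoc, h.mul_mul_left]

theorem right_mul_left_mul_sub (h : IsCARPair p q) : q * p * (p - q) = -q := by
  rw [mul_assoc, h.left_mul_sub, mul_neg, ← mul_assoc, h.mul_mul_right]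

theorem sub_mul_add_mul_carIdem (h : IsCARPair p q) (z : R) (b c : Bool) :
    (p - q) * (p + q) * carIdem p q z b c = ((-1 : R) ^ bval b) • carIdem p q z b c := by
  have hp : (p * q - q * p) * p = p := by
    rw [sub_mul, h.mul_mul_left, mul_assoc, h.mul_self_left, mul_zero, sub_zero]
  have hq : (p * q - q * p) * q = -q := by
    rw [sub_mul, h.mul_mul_right, mul_assoc, h.mul_self_right, mul_zero, zero_sub]
  rw [h.sub_mul_add]
  cases b <;> cases c <;>
    simp only [carIdem, mul_add, mul_sub, mul_smul_comm, ← mul_assoc, hp, hq, neg_mul,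
      bval_false, bval_true] <;>
    module

theorem carIdem_mul_sub_of_mul_self_eq_neg_one (h : IsCARPair p q) {z : R} (hz : z * z = -1)
    (b c : Bool) :
    carIdem p q z b c * (p - q) = ((-1 : R) ^ (bval c + 1) * z) • carIdem p q z b c := by
  have hzz : ∀ x : A, z • z • x = -x := fun x => by rw [smul_smul, hz, neg_one_smul]
  cases b <;> cases c <;>
    simp only [carIdem, add_mul, sub_mul, smul_mul_assoc, h.left_mul_sub, h.right_mul_sub,
      h.left_mul_right_mul_sub, h.right_mul_left_mul_sub, mul_smul, smul_add,
      smul_sub, hzz, bval_false, bval_true] <;>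
    module

theorem carIdem_one_mul_sub (h : IsCARPair p q) (b c : Bool) :
    carIdem p q (1 : R) b c * (p - q) =
      ((-1 : R) ^ (bval c + 1)) • carIdem p q (1 : R) b (!c) := by
  cases b <;> cases c <;>
    simp only [carIdem, add_mul, sub_mul, smul_mul_assoc, h.left_mul_sub, h.right_mul_sub,
      h.left_mul_right_mul_sub, h.right_mul_left_mul_sub, Bool.not_false,
      Bool.not_true, bval_false, bval_true] <;>
    module

end IsCARPair

theorem commute_carIdem {x : A} (hp : Commute x p) (hq : Commute x q) (z : R) (b c : Bool) :
    Commute x (carIdem p q z b c) := by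
  cases b <;> cases c
  · exact (hp.mul_right hq).add_right (hp.smul_right z)
  · exact (hp.mul_right hq).sub_right (hp.smul_right z)
  · exact (hq.mul_right hp).sub_right (hq.smul_right z)
  · exact (hq.mul_right hp).add_right (hq.smul_right z)

theorem mul_carIdem_of_anticomm {x : A} (hp : x * p = -(p * x)) (hq : x * q = -(q * x)) (z : R)
    (b c : Bool) : x * carIdem p q z b c = carIdem p q z b (!c) * x := by
  have hpq : x * (p * q) = p * q * x := by
    rw [← mul_assoc, hp, neg_mul, mul_assoc, hq, mul_neg, neg_neg, mul_assoc]
  have hqp : x * (q * p) = q * p * x := by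
    rw [← mul_assoc, hq, neg_mul, mul_assoc, hp, mul_neg, neg_neg, mul_assoc]
  cases b <;> cases c <;>
    simp only [carIdem, mul_add, mul_sub, add_mul, sub_mul, mul_smul_comm, smul_mul_assoc, hp, hq,
      hpq, hqp, Bool.not_false, Bool.not_true] <;>
    module

end CARPair

section Clifford

open CliffordAlgebra

variable {m : ℕ}

theorem splitQ_apply (v : (Fin m → ℂ) × (Fin m → ℂ)) : splitQ m v = ∑ j, v.1 j * v.2 j := rfl

theorem splitQ_polar (v w : (Fin m → ℂ) × (Fin m → ℂ)) :
    QuadraticMap.polar (splitQ m) v w = ∑ j, v.1 j * w.2 j + ∑ j, w.1 j * v.2 j := by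
  rw [splitQ, LinearMap.BilinMap.polar_toQuadraticMap]
  rfl

theorem sum_ite_mul_ite_of_ne {j l : ℕ} (h : j ≠ l) :
    ∑ i : Fin m, (if (i : ℕ) + 1 = j then (1 : ℂ) else 0) * (if (i : ℕ) + 1 = l then 1 else 0)
      = 0 :=
  Finset.sum_eq_zero fun i _ => by split_ifs <;> first | omega | simp

theorem sum_ite_mul_ite_self {j : ℕ} (h1 : 1 ≤ j) (h2 : j ≤ m) :
    ∑ i : Fin m, (if (i : ℕ) + 1 = j then (1 : ℂ) else 0) * (if (i : ℕ) + 1 = j then 1 else 0)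
      = 1 := by
  have hj : ∀ i : Fin m, (i : ℕ) + 1 = j ↔ i = ⟨j - 1, by omega⟩ := fun i => by
    simp only [Fin.ext_iff]; omega
  simp only [hj, mul_ite, mul_one, mul_zero, Finset.sum_ite_eq', Finset.mem_univ, if_true]

theorem eP_mul_eP_self (j : ℕ) : eP m j * eP m j = 0 := by
  rw [eP, ι_sq_scalar, splitQ_apply]; simp

theorem eM_mul_eM_self (j : ℕ) : eM m j * eM m j = 0 := by
  rw [eM, ι_sq_scalar, splitQ_apply]; simp

theorem eP_mul_eP (j l : ℕ) : eP m j * eP m l = -(eP m l * eP m j) := by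
  refine eq_neg_of_add_eq_zero_left ?_
  rw [eP, eP, ι_mul_ι_add_swap, splitQ_polar]; simp

theorem eM_mul_eM (j l : ℕ) : eM m j * eM m l = -(eM m l * eM m j) := by
  refine eq_neg_of_add_eq_zero_left ?_
  rw [eM, eM, ι_mul_ι_add_swap, splitQ_polar]; simp

theorem eP_mul_eM_of_ne {j l : ℕ} (h : j ≠ l) : eP m j * eM m l = -(eM m l * eP m j) := by
  refine eq_neg_of_add_eq_zero_left ?_
  rw [eP, eM, ι_mul_ι_add_swap, splitQ_polar]
  simp only [Pi.zero_apply, mul_zero, Finset.sum_const_zero, add_zero, sum_ite_mul_ite_of_ne h,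
    map_zero]

theorem eM_mul_eP_of_ne {j l : ℕ} (h : j ≠ l) : eM m j * eP m l = -(eP m l * eM m j) := by
  rw [eP_mul_eM_of_ne h.symm, neg_neg]

theorem isCARPair_eP_eM {j : ℕ} (h1 : 1 ≤ j) (h2 : j ≤ m) : IsCARPair (eP m j) (eM m j) where
  mul_self_left := eP_mul_eP_self j
  mul_self_right := eM_mul_eM_self j
  mul_add_mul_swap := by
    rw [eP, eM, ι_mul_ι_add_swap, splitQ_polar]
    simp only [Pi.zero_apply, mul_zero, Finset.sum_const_zero, add_zero,
      sum_ite_mul_ite_self h1 h2, map_one]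

theorem eperp_mul_eP_of_ne {t s : ℕ} (h : t ≠ s) : eperp m t * eP m s = -(eP m s * eperp m t) := by
  rw [eperp, sub_mul, mul_sub, eP_mul_eP, eM_mul_eP_of_ne h]; abel

theorem eperp_mul_eM_of_ne {t s : ℕ} (h : t ≠ s) : eperp m t * eM m s = -(eM m s * eperp m t) := by
  rw [eperp, sub_mul, mul_sub, eP_mul_eM_of_ne h, eM_mul_eM]; abel

theorem ee_mul_eP_of_ne {t s : ℕ} (h : t ≠ s) : ee m t * eP m s = -(eP m s * ee m t) := by
  rw [ee, add_mul, mul_add, eP_mul_eP, eM_mul_eP_of_ne h]; abel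

theorem ee_mul_eM_of_ne {t s : ℕ} (h : t ≠ s) : ee m t * eM m s = -(eM m s * ee m t) := by
  rw [ee, add_mul, mul_add, eP_mul_eM_of_ne h, eM_mul_eM]; abel

theorem idemF_eq_carIdem (s : ℕ) (b c : Bool) :
    idemF m s b c = carIdem (eP m s) (eM m s) (oddI s) b c := by
  cases b <;> cases c <;> rfl

theorem commute_eperp_mul_ee_idemF {t s : ℕ} (h : t ≠ s) (b c : Bool) :
    Commute (eperp m t * ee m t) (idemF m s b c) := by
  rw [idemF_eq_carIdem]
  exact commute_carIdem (commute_mul_of_anticomm (eperp_mul_eP_of_ne h) (ee_mul_eP_of_ne h))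
    (commute_mul_of_anticomm (eperp_mul_eM_of_ne h) (ee_mul_eM_of_ne h)) _ b c

theorem eperp_mul_idemF_of_ne {t s : ℕ} (h : t ≠ s) (b c : Bool) :
    eperp m t * idemF m s b c = idemF m s b (!c) * eperp m t := by
  rw [idemF_eq_carIdem, idemF_eq_carIdem]
  exact mul_carIdem_of_anticomm (eperp_mul_eP_of_ne h) (eperp_mul_eM_of_ne h) _ b c

theorem eperp_mul_ee_mul_idemF {s : ℕ} (h1 : 1 ≤ s) (h2 : s ≤ m) (b c : Bool) :
    eperp m s * ee m s * idemF m s b c = ((-1 : ℂ) ^ bval b) • idemF m s b c := by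
  rw [idemF_eq_carIdem]
  exact (isCARPair_eP_eM h1 h2).sub_mul_add_mul_carIdem _ b c

theorem idemF_mul_eperp_odd {k : ℕ} (h1 : 1 ≤ k) (h2 : 2 * k ≤ m) (b c : Bool) :
    idemF m (2 * k - 1) b c * eperp m (2 * k - 1) =
      ((-1 : ℂ) ^ (bval c + 1) * Complex.I) • idemF m (2 * k - 1) b c := by
  have hI : oddI (2 * k - 1) = Complex.I := if_pos (by omega)
  rw [idemF_eq_carIdem, hI]
  exact (isCARPair_eP_eM (by omega) (by omega)).carIdem_mul_sub_of_mul_self_eq_neg_one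
    Complex.I_mul_I b c

theorem idemF_mul_eperp_even {k : ℕ} (h1 : 1 ≤ k) (h2 : 2 * k ≤ m) (b c : Bool) :
    idemF m (2 * k) b c * eperp m (2 * k) =
      ((-1 : ℂ) ^ (bval c + 1)) • idemF m (2 * k) b (!c) := by
  have hI : oddI (2 * k) = 1 := if_neg (by omega)
  rw [idemF_eq_carIdem, idemF_eq_carIdem, hI]
  exact (isCARPair_eP_eM (by omega) h2).carIdem_one_mul_sub b c

end Clifford

def factorF (m : ℕ) (nrm sg : ℕ → Bool) (s : ℕ) : CliffordAlgebra (splitQ m) :=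
  idemF m s (nrm s) (sg s)

def flipFrom (k : ℕ) (sg : ℕ → Bool) (s : ℕ) : Bool := if k ≤ s then !sg s else sg s

theorem flipFrom_flipFrom {k l : ℕ} (h : k < l) (sg : ℕ → Bool) :
    flipFrom l (flipFrom k sg) = fun s => if k ≤ s ∧ s ≤ l - 1 then !sg s else sg s := by
  funext s
  unfold flipFrom
  split_ifs <;> first | rfl | exact Bool.not_not _ | omega

section Products

variable {m : ℕ} (nrm : ℕ → Bool)

theorem prodF_eq_prod_range' (sg : ℕ → Bool) :
    prodF m nrm sg = ((List.range' 1 m).map (factorF m nrm sg)).prod := by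
  show _ = ((List.range' (0 + 1) m).map _).prod
  rw [List.range'_succ_left, List.map_map, ← List.range_eq_range']
  rfl

theorem prodF_eq_mul_mul (sg : ℕ → Bool) {p : ℕ} (h1 : 1 ≤ p) (h2 : p ≤ m) :
    prodF m nrm sg =
      ((List.range' 1 (p - 1)).map (factorF m nrm sg)).prod * factorF m nrm sg p *
        ((List.range' (p + 1) (m - p)).map (factorF m nrm sg)).prod := by
  have hsplit := List.range'_append_1 (s := 1) (m := p - 1) (n := m - p + 1)
  rw [show 1 + (p - 1) = p by omega, show p - 1 + (m - p + 1) = m by omega,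
    List.range'_succ] at hsplit
  rw [prodF_eq_prod_range', ← hsplit, List.map_append, List.prod_append, List.map_cons,
    List.prod_cons, mul_assoc]

theorem eperp_mul_ee_mul_prodF (sg : ℕ → Bool) {p : ℕ} (h1 : 1 ≤ p) (h2 : p ≤ m) :
    eperp m p * ee m p * prodF m nrm sg = ((-1 : ℂ) ^ bval (nrm p)) • prodF m nrm sg := by
  have hpre : Commute (eperp m p * ee m p)
      ((List.range' 1 (p - 1)).map (factorF m nrm sg)).prod :=
    Commute.list_prod_right _ _ fun x hx => by
      obtain ⟨s, hs, rfl⟩ := List.mem_map.1 hx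
      exact commute_eperp_mul_ee_idemF (by rw [List.mem_range'_1] at hs; omega) _ _
  rw [prodF_eq_mul_mul nrm sg h1 h2, mul_assoc _ (factorF m nrm sg p), ← mul_assoc, hpre.eq,
    mul_assoc, ← mul_assoc _ (factorF m nrm sg p), factorF, eperp_mul_ee_mul_idemF h1 h2,
    smul_mul_assoc, mul_smul_comm, ← mul_assoc]

theorem VV_mul_prodF (sg : ℕ → Bool) {p q : ℕ} (hp1 : 1 ≤ p) (hpm : p ≤ m) (hq1 : 1 ≤ q)
    (hqm : q ≤ m) :
    VV m p q * prodF m nrm sg =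
      (-((-1 : ℂ) ^ bval (nrm p) * (-1 : ℂ) ^ bval (nrm q))) • prodF m nrm sg := by
  have hV : VV m p q = -(eperp m p * ee m p * (eperp m q * ee m q)) := by
    rw [VV, mul_assoc (eperp m p * ee m p)]
  rw [hV, neg_mul, mul_assoc, eperp_mul_ee_mul_prodF nrm sg hq1 hqm, mul_smul_comm,
    eperp_mul_ee_mul_prodF nrm sg hp1 hpm, smul_smul, neg_smul, mul_comm ((-1 : ℂ) ^ bval (nrm q))]

theorem prodF_mul_eperp {sg sg' : ℕ → Bool} {p : ℕ} {z : ℂ} (h1 : 1 ≤ p) (h2 : p ≤ m)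
    (hlt : ∀ s < p, sg' s = sg s) (hgt : ∀ s, p < s → sg' s = !sg s)
    (hp : idemF m p (nrm p) (sg p) * eperp m p = z • idemF m p (nrm p) (sg' p)) :
    prodF m nrm sg * eperp m p = z • prodF m nrm sg' := by
  have hpre : ((List.range' 1 (p - 1)).map (factorF m nrm sg)).prod =
      ((List.range' 1 (p - 1)).map (factorF m nrm sg')).prod := by
    refine congrArg List.prod (List.map_congr_left fun s hs => ?_)
    rw [List.mem_range'_1] at hs
    rw [factorF, factorF, hlt s (by omega)]
  have hpost : ((List.range' (p + 1) (m - p)).map (factorF m nrm sg)).prod * eperp m p =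
      eperp m p * ((List.range' (p + 1) (m - p)).map (factorF m nrm sg')).prod :=
    prod_map_mul_eq_mul_prod_map _ fun s hs => by
      rw [List.mem_range'_1] at hs
      rw [factorF, factorF, hgt s (by omega), eperp_mul_idemF_of_ne (by omega), Bool.not_not]
  rw [prodF_eq_mul_mul nrm sg h1 h2, prodF_eq_mul_mul nrm sg' h1 h2, mul_assoc, hpost, hpre,
    ← mul_assoc, mul_assoc _ (factorF m nrm sg p), factorF, factorF, hp, mul_smul_comm,
    smul_mul_assoc]

theorem prodF_mul_eperp_odd (sg : ℕ → Bool) {k : ℕ} (h1 : 1 ≤ k) (h2 : 2 * k ≤ m) :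
    prodF m nrm sg * eperp m (2 * k - 1) =
      ((-1 : ℂ) ^ (bval (sg (2 * k - 1)) + 1) * Complex.I) • prodF m nrm (flipFrom (2 * k) sg) :=
  prodF_mul_eperp nrm (by omega) (by omega)
    (fun s hs => if_neg (by omega)) (fun s hs => if_pos (by omega))
    (by rw [flipFrom, if_neg (by omega)]; exact idemF_mul_eperp_odd h1 h2 _ _)

theorem prodF_mul_eperp_even (sg : ℕ → Bool) {k : ℕ} (h1 : 1 ≤ k) (h2 : 2 * k ≤ m) :
    prodF m nrm sg * eperp m (2 * k) =
      ((-1 : ℂ) ^ (bval (sg (2 * k)) + 1)) • prodF m nrm (flipFrom (2 * k) sg) :=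
  prodF_mul_eperp nrm (by omega) h2
    (fun s hs => if_neg (by omega)) (fun s hs => if_pos (by omega))
    (by rw [flipFrom, if_pos le_rfl]; exact idemF_mul_eperp_even h1 h2 _ _)

end Products

theorem V_prodF_eperp_oddodd_eveneven_general (n : ℕ) (nrm sg : ℕ → Bool)
    (a b : ℕ) (ha : 1 ≤ a) (hab : a < b) (hb : b ≤ n) :
    VV (2 * n) (2 * a - 1) (2 * b - 1) * prodF (2 * n) nrm sg *
          eperp (2 * n) (2 * a - 1) * eperp (2 * n) (2 * b - 1) =
        ((-1 : ℂ) ^ (bval (sg (2 * a - 1)) + bval (sg (2 * b - 1)) +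
            bval (nrm (2 * a - 1)) + bval (nrm (2 * b - 1)) + 1)) •
          prodF (2 * n) nrm
            (fun s => if 2 * a ≤ s ∧ s ≤ 2 * b - 1 then !sg s else sg s) ∧
      VV (2 * n) (2 * a) (2 * b) * prodF (2 * n) nrm sg *
          eperp (2 * n) (2 * a) * eperp (2 * n) (2 * b) =
        ((-1 : ℂ) ^ (bval (sg (2 * a)) + bval (sg (2 * b)) +
            bval (nrm (2 * a)) + bval (nrm (2 * b)))) •
          prodF (2 * n) nrm
            (fun s => if 2 * a ≤ s ∧ s ≤ 2 * b - 1 then !sg s else sg s) := by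
  have hflip : ∀ s, 2 * a ≤ s → flipFrom (2 * a) sg s = !sg s := fun s hs => if_pos hs
  rw [← flipFrom_flipFrom (by omega)]
  constructor
  · rw [VV_mul_prodF nrm sg (by omega) (by omega) (by omega) (by omega), smul_mul_assoc,
      prodF_mul_eperp_odd nrm sg ha (by omega), smul_mul_assoc, smul_mul_assoc,
      prodF_mul_eperp_odd nrm _ (by omega : 1 ≤ b) (by omega), smul_smul, smul_smul,
      hflip _ (by omega)]
    congr 1
    simp only [pow_add, pow_one, neg_one_pow_bval_not]
    linear_combination ((-1 : ℂ) ^ bval (sg (2 * a - 1)) * (-1) ^ bval (sg (2 * b - 1)) *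
      (-1) ^ bval (nrm (2 * a - 1)) * (-1) ^ bval (nrm (2 * b - 1))) * Complex.I_mul_I
  · rw [VV_mul_prodF nrm sg (by omega) (by omega) (by omega) (by omega), smul_mul_assoc,
      prodF_mul_eperp_even nrm sg ha (by omega), smul_mul_assoc, smul_mul_assoc,
      prodF_mul_eperp_even nrm _ (by omega : 1 ≤ b) (by omega), smul_smul, smul_smul,
      hflip _ (by omega)]
    congr 1
    simp only [pow_add, pow_one, neg_one_pow_bval_not]
    ring

/-- with `m = 2n`, `n ≥ 2`, `1 ≤ a < b ≤ n`, the odd-odd and even-even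
cases of the action `V_{·,·} F e_·^⊥ e_·^⊥`, producing `F^{2a,2b-1}` (the product `F` with
factors in positions `2a, …, 2b-1` replaced by their tilded versions, i.e. `|·|` flipped). -/
theorem V_prodF_eperp_oddodd_eveneven (n : ℕ) (hn : 2 ≤ n) (nrm sg : ℕ → Bool)
    (a b : ℕ) (ha : 1 ≤ a) (hab : a < b) (hb : b ≤ n) :
    VV (2 * n) (2 * a - 1) (2 * b - 1) * prodF (2 * n) nrm sg *
          eperp (2 * n) (2 * a - 1) * eperp (2 * n) (2 * b - 1) =
        ((-1 : ℂ) ^ (bval (sg (2 * a - 1)) + bval (sg (2 * b - 1)) +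
            bval (nrm (2 * a - 1)) + bval (nrm (2 * b - 1)) + 1)) •
          prodF (2 * n) nrm
            (fun s => if 2 * a ≤ s ∧ s ≤ 2 * b - 1 then !sg s else sg s) ∧
      VV (2 * n) (2 * a) (2 * b) * prodF (2 * n) nrm sg *
          eperp (2 * n) (2 * a) * eperp (2 * n) (2 * b) =
        ((-1 : ℂ) ^ (bval (sg (2 * a)) + bval (sg (2 * b)) +
            bval (nrm (2 * a)) + bval (nrm (2 * b)))) •
          prodF (2 * n) nrm
            (fun s => if 2 * a ≤ s ∧ s ≤ 2 * b - 1 then !sg s else sg s) :=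
  V_prodF_eperp_oddodd_eveneven_general n nrm sg a b ha hab hb

end
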